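/- arXiv:2306.15750 — 7 statements merged into one kernel-verified Lean document; each statement's English description precedes it below -/
import Mathlib

section
/- Let n be a positive integer and σ a permutation of {1,...,n} satisfying σ(k) ≤ k+1 for all k. Write X(σ) = {s₁ < s₂ < ... < s_l} (with s_l = n) and set s₀ = 0. Then σ(s_{i+1}) = s_i + 1 for all i ∈ {0,1,...,l-1}. -/
/-!
Every `k ∉ X(σ)` has `σ k = k + 1`. If `p ∈ X(σ)`, then `σ` maps `{0, …, p}` into itself, hence
onto itself, so every `k > p` has `σ k > p`. Conversely, if `k ∈ X(σ)` and `[c, k)` avoids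
`X(σ)`, then `σ k ≤ c`: otherwise `q = σ k - 1` lies in `[c, k)`, so `σ q = q + 1 = σ k`, which
contradicts injectivity. Taking `p = s_i` and `c = s_i + 1` for `k = s_{i+1}` yields the claim.
-/

theorem Finset.notMem_of_lt_orderIso_apply {α β : Type*} [Preorder α] [Preorder β]
    {s : Finset α} (t : β ≃o s) {i : β} {a : α} (hai : a < t i)
    (hlow : ∀ j < i, (t j : α) < a) : a ∉ s := by
  intro ha
  have hj : t (t.symm ⟨a, ha⟩) = ⟨a, ha⟩ := t.apply_symm_apply _
  have hji : t.symm ⟨a, ha⟩ < i := t.lt_iff_lt.1 (by rw [hj]; exact hai)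
  exact lt_irrefl a (by simpa [hj] using hlow _ hji)

namespace Equiv.Perm

variable {n : ℕ} {σ : Perm (Fin n)}

theorem lt_apply_of_lt_of_apply_le (hσ : ∀ k : Fin n, (σ k : ℕ) ≤ k + 1) {p q : Fin n}
    (hp : σ p ≤ p) (hpq : p < q) : p < σ q := by
  have hmaps : (Finset.Iic p).image σ ⊆ Finset.Iic p := by
    intro x hx
    obtain ⟨r, hr, rfl⟩ := Finset.mem_image.1 hx
    rcases (Finset.mem_Iic.1 hr).lt_or_eq with hrp | rfl
    · have := hσ r
      rw [Finset.mem_Iic, Fin.le_def]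
      rw [Fin.lt_def] at hrp
      omega
    · exact Finset.mem_Iic.2 hp
  have honto : (Finset.Iic p).image σ = Finset.Iic p :=
    Finset.eq_of_subset_of_card_le hmaps (Finset.card_image_of_injective _ σ.injective).ge
  by_contra! hq
  obtain ⟨r, hr, hrq⟩ := Finset.mem_image.1 (honto ▸ Finset.mem_Iic.2 hq)
  exact (Finset.mem_Iic.1 hr).not_gt (σ.injective hrq ▸ hpq)

theorem apply_le_of_forall_lt_apply (hσ : ∀ k : Fin n, (σ k : ℕ) ≤ k + 1) {k : Fin n}
    (hk : σ k ≤ k) {c : ℕ} (hc : ∀ q : Fin n, c ≤ q → q < k → q < σ q) : (σ k : ℕ) ≤ c := by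
  rw [Fin.le_def] at hk
  by_contra! hck
  let q : Fin n := ⟨σ k - 1, by omega⟩
  have hqv : (q : ℕ) = σ k - 1 := rfl
  have hqk : (q : ℕ) < k := by omega
  have hσq : σ q = σ k := by
    have hlt := Fin.lt_def.1 (hc q (by omega) (Fin.lt_def.2 hqk))
    have hle := hσ q
    exact Fin.ext (by omega)
  exact hqk.ne (congrArg Fin.val (σ.injective hσq))

end Equiv.Perm

/-- Let `σ` be a permutation of `{1,…,n}` (modeled as `Fin n`, `0`-indexed)
with `σ(k) ≤ k+1` for all `k`.  List the non-excedance set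
`X(σ) = {k : σ(k) ≤ k}` in increasing order as `s₁ < … < s_l` and set
`s₀ := 0`.  Then `σ(s_{i+1}) = s_i + 1` for `i = 0,…,l-1`.  In the
`0`-indexed model this reads: `σ(t i) = 0` if `i = 0` and
`σ(t i) = t (i-1) + 1` otherwise, where `t : Fin l ≃o X(σ)` is the order
isomorphism. -/
theorem miller_lemma_values_on_X (n : ℕ) (σ : Equiv.Perm (Fin n))
    (hσ : ∀ k : Fin n, (σ k : ℕ) ≤ (k : ℕ) + 1)
    (X : Finset (Fin n)) (hX : X = Finset.univ.filter (fun k : Fin n => (σ k : ℕ) ≤ (k : ℕ))) :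
    ∀ i : Fin X.card,
      (σ ((X.orderIsoOfFin rfl i : Fin n)) : ℕ) =
        if h0 : (i : ℕ) = 0 then 0
        else ((X.orderIsoOfFin rfl ⟨(i : ℕ) - 1, by have := i.2; omega⟩ : Fin n) : ℕ) + 1 := by
  have hmem : ∀ k : Fin n, k ∈ X ↔ σ k ≤ k := by
    simp only [hX, Finset.mem_filter, Finset.mem_univ, true_and, Fin.le_def, implies_true]
  have lt_of_notMem : ∀ q : Fin n, q ∉ X → q < σ q := fun q hq => not_le.1 ((hmem q).not.1 hq)
  intro i
  set t := X.orderIsoOfFin rfl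
  have hti : σ (t i) ≤ t i := (hmem _).1 (t i).2
  split_ifs with h0
  · refine Nat.le_zero.1 (σ.apply_le_of_forall_lt_apply hσ hti fun q _ hqi => lt_of_notMem q ?_)
    exact X.notMem_of_lt_orderIso_apply t hqi fun j hj => by rw [Fin.lt_def] at hj; omega
  · set j : Fin X.card := ⟨i - 1, by omega⟩
    have hji : j < i := by rw [Fin.lt_def]; simp only [j]; omega
    have hlower : t j < σ (t i) :=
      σ.lt_apply_of_lt_of_apply_le hσ ((hmem _).1 (t j).2) (t.lt_iff_lt.2 hji)
    have hupper : (σ (t i) : ℕ) ≤ (t j : Fin n) + 1 := by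
      refine σ.apply_le_of_forall_lt_apply hσ hti fun q hjq hqi => lt_of_notMem q ?_
      refine X.notMem_of_lt_orderIso_apply t hqi fun j' hj' => ?_
      have hj'j : j' ≤ j := by rw [Fin.le_def]; rw [Fin.lt_def] at hj'; simp only [j]; omega
      have : (t j' : Fin n) ≤ t j := t.le_iff_le.2 hj'j
      rw [Fin.lt_def]; rw [Fin.le_def] at this; omega
    rw [Fin.lt_def] at hlower
    omega
end

section
/- Let n be a positive integer and σ a permutation of {1,...,n} satisfying σ(k) ≤ k+1 for all k. If X(σ) = {k : σ(k) ≤ k} has exactly l elements, then the sign of σ equals (-1)^{n-l}. -/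
/-!
Under `σ k ≤ k + 1` every excedance `k < σ k` is an exact step `σ k = k + 1`, and `X(σ)` is
the complement of the excedance set. If `k` is the largest excedance then `σ (σ k) ≤ k`, so
`σ * swap k (σ k)` still satisfies the hypothesis and has lost exactly the excedance `k`.
Repeating this reaches a permutation without excedances, which is the identity; every swap
flips the sign.
-/

open Equiv Finset

namespace Equiv.Perm

variable {n : ℕ}

def excedances (σ : Perm (Fin n)) : Finset (Fin n) := {k | k < σ k}

@[simp]
lemma mem_excedances {σ : Perm (Fin n)} {k : Fin n} : k ∈ excedances σ ↔ k < σ k := by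
  simp [excedances]

lemma card_filter_apply_le_add_card_excedances (σ : Perm (Fin n)) :
    #{k | σ k ≤ k} + #(excedances σ) = n := by
  simpa [excedances] using card_filter_add_card_filter_not (s := univ) (fun k => σ k ≤ k)

lemma eq_one_of_excedances_eq_empty {σ : Perm (Fin n)} (h : excedances σ = ∅) : σ = 1 := by
  have hle : ∀ k ∈ (univ : Finset (Fin n)), (σ k : ℕ) ≤ k := fun k _ => by
    simpa using (Finset.eq_empty_iff_forall_notMem.1 h k)
  -- `σ` permutes the summands of `∑ k`, so no term can drop strictly.
  have hsum : ∑ k : Fin n, (σ k : ℕ) = ∑ k : Fin n, (k : ℕ) := Equiv.sum_comp σ (fun k => (k : ℕ))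
  ext k
  exact (sum_eq_sum_iff_of_le hle).1 hsum k (mem_univ k)

lemma apply_apply_le_of_forall_excedance_le {σ : Perm (Fin n)}
    (hσ : ∀ k, (σ k : ℕ) ≤ k + 1) {k : Fin n} (hk : k < σ k)
    (hmax : ∀ j ∈ excedances σ, j ≤ k) : σ (σ k) ≤ k := by
  -- `σ (σ k) ≤ σ k + 1 = k + 2`: the value `k + 2` would be a larger excedance `σ k`,
  -- and the value `k + 1 = σ k` contradicts injectivity.
  have hne : σ (σ k) ≠ σ k := fun h => hk.ne (σ.injective h).symm
  have hnot : ¬ σ k < σ (σ k) := fun h => (hmax _ (mem_excedances.2 h)).not_gt hk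
  have := hσ k
  have := hσ (σ k)
  rw [Fin.le_def]; rw [Fin.lt_def] at hk hnot; rw [ne_eq, Fin.ext_iff] at hne
  omega

lemma excedances_mul_swap {σ : Perm (Fin n)} {k : Fin n} (hk : k < σ k)
    (h : σ (σ k) ≤ k) : excedances (σ * swap k (σ k)) = (excedances σ).erase k := by
  ext x
  simp only [mem_excedances, mem_erase, Perm.mul_apply]
  rcases eq_or_ne x k with rfl | hxk
  · simpa using h
  rcases eq_or_ne x (σ k) with rfl | hxσk
  · simpa using fun _ => h.trans hk.le
  · simp [swap_apply_of_ne_of_ne hxk hxσk, hxk]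

lemma mul_swap_apply_le_succ {σ : Perm (Fin n)} (hσ : ∀ k, (σ k : ℕ) ≤ k + 1) {k : Fin n}
    (h : σ (σ k) ≤ k) (x : Fin n) : ((σ * swap k (σ k)) x : ℕ) ≤ x + 1 := by
  rcases eq_or_ne x k with rfl | hxk
  · simpa using Nat.le_succ_of_le (Fin.le_def.1 h)
  rcases eq_or_ne x (σ k) with rfl | hxσk
  · simp
  · simpa [swap_apply_of_ne_of_ne hxk hxσk] using hσ x

theorem sign_eq_neg_one_pow_card_excedances {σ : Perm (Fin n)}
    (hσ : ∀ k, (σ k : ℕ) ≤ k + 1) : sign σ = (-1) ^ #(excedances σ) := by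
  obtain ⟨m, hm⟩ : ∃ m, #(excedances σ) = m := ⟨_, rfl⟩
  rw [hm]
  induction m generalizing σ with
  | zero => simp [eq_one_of_excedances_eq_empty (card_eq_zero.1 hm)]
  | succ m ih =>
    have hne : (excedances σ).Nonempty := card_pos.1 (by omega)
    set k := (excedances σ).max' hne
    have hk : k < σ k := mem_excedances.1 (max'_mem _ hne)
    have hσσk := apply_apply_le_of_forall_excedance_le hσ hk fun j hj => le_max' _ j hj
    have hsign := ih (mul_swap_apply_le_succ hσ hσσk) <| by
      rw [excedances_mul_swap hk hσσk, card_erase_of_mem (max'_mem _ hne), hm, Nat.add_sub_cancel]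
    rw [sign_mul, sign_swap hk.ne] at hsign
    rw [pow_succ, ← hsign, mul_assoc, Int.units_mul_self, mul_one]

end Equiv.Perm

open Equiv.Perm in
theorem miller_lemma_sign_general (n : ℕ) (σ : Equiv.Perm (Fin n))
    (hσ : ∀ k : Fin n, (σ k : ℕ) ≤ (k : ℕ) + 1) :
    Equiv.Perm.sign σ =
      (-1) ^ (n - (Finset.univ.filter (fun k : Fin n => (σ k : ℕ) ≤ (k : ℕ))).card) := by
  have hcard := card_filter_apply_le_add_card_excedances σ
  simp only [Fin.val_fin_le]
  rw [sign_eq_neg_one_pow_card_excedances hσ]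
  congr 1
  omega

/-- If `σ` is a permutation of `{1,…,n}` (modeled as `Fin n`) with
`σ(k) ≤ k+1` for all `k`, and `X(σ) = {k : σ(k) ≤ k}` has `l` elements,
then `sign σ = (-1)^(n-l)`. -/
theorem miller_lemma_sign (n : ℕ) (hn : 0 < n) (σ : Equiv.Perm (Fin n))
    (hσ : ∀ k : Fin n, (σ k : ℕ) ≤ (k : ℕ) + 1) :
    Equiv.Perm.sign σ =
      (-1) ^ (n - (Finset.univ.filter (fun k : Fin n => (σ k : ℕ) ≤ (k : ℕ))).card) :=
  miller_lemma_sign_general n σ hσ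
end

section
/- The map σ ↦ X(σ) := {k ∈ [n] : σ(k) ≤ k} is a bijection between the set of permutations σ of {1,...,n} satisfying σ(k) ≤ k+1 for all k, and the set of subsets of {1,...,n} that contain n. -/
/-!
For `X = X(σ)`, every `k ∉ X` has `σ k = k + 1`, so the complement of `X` is mapped
upwards one step at a time. Cutting `Fin n` after each element of `X` gives blocks
`(m, m']` with `m < m'` consecutive in `X`; on each block `σ` must be the cycle
`m + 1 ↦ m + 2 ↦ ⋯ ↦ m' ↦ m + 1`, because `{x ≤ m}` is `σ`-invariant. Hence `σ` is
determined by `X`, and conversely any `S` containing the last point is the set `X` of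
the permutation cycling the blocks of `S`.
-/

open Finset Function

namespace MillerBijection

variable {n : ℕ}

/-- One past the largest element of `S` below `k`, or `0` if there is none. -/
def blockStart (S : Finset (Fin n)) (k : Fin n) : ℕ :=
  (S.filter fun x : Fin n => (x : ℕ) < k).sup fun x => (x : ℕ) + 1

/-- The permutation cycling each block of `S`, as a map `Fin n → ℕ`. -/
def cycleBlocks (S : Finset (Fin n)) (k : Fin n) : ℕ :=
  if k ∈ S then blockStart S k else k + 1

section Blocks

variable (S : Finset (Fin n))

lemma lt_blockStart_iff {j : ℕ} {k : Fin n} :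
    j < blockStart S k ↔ ∃ m ∈ S, (m : ℕ) < k ∧ j ≤ m := by
  simp [blockStart, Finset.lt_sup_iff, and_assoc]

lemma blockStart_le (k : Fin n) : blockStart S k ≤ k :=
  Finset.sup_le fun x hx => by
    simp only [Finset.mem_filter] at hx
    omega

lemma mem_of_blockStart_eq_succ {j k : Fin n} (h : blockStart S k = j + 1) : j ∈ S := by
  obtain ⟨m, hmS, hmk, hjm⟩ :=
    (lt_blockStart_iff S).1 (show (j : ℕ) < blockStart S k by omega)
  have hmj : (m : ℕ) < blockStart S k := (lt_blockStart_iff S).2 ⟨m, hmS, hmk, le_rfl⟩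
  rwa [show j = m from Fin.ext (by omega)]

lemma cycleBlocks_le_succ (k : Fin n) : cycleBlocks S k ≤ k + 1 := by
  unfold cycleBlocks
  split_ifs
  · exact (blockStart_le S k).trans k.val.le_succ
  · rfl

lemma cycleBlocks_le_iff {k : Fin n} : cycleBlocks S k ≤ k ↔ k ∈ S := by
  unfold cycleBlocks
  split_ifs with hk
  · exact iff_of_true (blockStart_le S k) hk
  · exact iff_of_false (by omega) hk

lemma cycleBlocks_lt (hlast : ∀ k : Fin n, (k : ℕ) + 1 = n → k ∈ S) (k : Fin n) :
    cycleBlocks S k < n := by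
  have := blockStart_le S k
  have := k.isLt
  unfold cycleBlocks
  split_ifs with hk
  · omega
  · exact lt_of_le_of_ne k.isLt fun h => hk (hlast k h)

lemma cycleBlocks_injective : Injective (cycleBlocks S) := by
  intro a b h
  by_contra hne
  wlog hab : a < b generalizing a b
  · exact this h.symm (Ne.symm hne) (lt_of_le_of_ne (not_lt.1 hab) (Ne.symm hne))
  have ha := cycleBlocks_le_succ S a
  by_cases hb : b ∈ S
  · have hbS : cycleBlocks S b = blockStart S b := if_pos hb
    by_cases haS : a ∈ S
    · have := (lt_blockStart_iff S (k := b)).2 ⟨a, haS, hab, le_rfl⟩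
      have := (cycleBlocks_le_iff S).2 haS
      omega
    · have hsucc : cycleBlocks S a = a + 1 := if_neg haS
      exact haS (mem_of_blockStart_eq_succ S (k := b) (by omega))
  · have hbS : cycleBlocks S b = b + 1 := if_neg hb
    have : (a : ℕ) < b := hab
    omega

noncomputable def cycleBlocksPerm (hlast : ∀ k : Fin n, (k : ℕ) + 1 = n → k ∈ S) :
    Equiv.Perm (Fin n) :=
  Equiv.ofBijective (fun k => ⟨cycleBlocks S k, cycleBlocks_lt S hlast k⟩) <|
    Finite.injective_iff_bijective.mp fun _ _ h => cycleBlocks_injective S (congrArg Fin.val h)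

lemma cycleBlocksPerm_apply_val (hlast : ∀ k : Fin n, (k : ℕ) + 1 = n → k ∈ S) (k : Fin n) :
    (cycleBlocksPerm S hlast k : ℕ) = cycleBlocks S k :=
  rfl

end Blocks

def nonExcedances (σ : Equiv.Perm (Fin n)) : Finset (Fin n) :=
  univ.filter fun k => (σ k : ℕ) ≤ k

section Perm

variable {σ : Equiv.Perm (Fin n)}

lemma mem_nonExcedances {k : Fin n} : k ∈ nonExcedances σ ↔ (σ k : ℕ) ≤ k := by
  simp [nonExcedances]

lemma apply_eq_succ_of_notMem_nonExcedances (hσ : ∀ k, (σ k : ℕ) ≤ k + 1) {k : Fin n}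
    (hk : k ∉ nonExcedances σ) : (σ k : ℕ) = k + 1 := by
  have := hσ k
  rw [mem_nonExcedances] at hk
  omega

lemma apply_le_blockStart (hσ : ∀ k, (σ k : ℕ) ≤ k + 1) {k : Fin n}
    (hk : k ∈ nonExcedances σ) : (σ k : ℕ) ≤ blockStart (nonExcedances σ) k := by
  by_contra! hlt
  rw [mem_nonExcedances] at hk
  -- `j := σ k - 1` lies in the block of `k` below `k`, so `σ j = j + 1 = σ k`.
  let j : Fin n := ⟨σ k - 1, by omega⟩
  have hjk : (j : ℕ) < k := by simp only [j]; omega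
  have hj : j ∉ nonExcedances σ := fun hj => by
    have := (lt_blockStart_iff _).2 ⟨j, hj, hjk, le_rfl⟩
    simp only [j] at this
    omega
  have hσj : σ j = σ k := Fin.ext <| by
    rw [apply_eq_succ_of_notMem_nonExcedances hσ hj]
    simp only [j]
    omega
  exact absurd (σ.injective hσj) (Fin.ne_of_lt hjk)

lemma blockStart_le_apply (hσ : ∀ k, (σ k : ℕ) ≤ k + 1) (k : Fin n) :
    blockStart (nonExcedances σ) k ≤ σ k := by
  by_contra! hlt
  obtain ⟨m, hm, hmk, hkm⟩ := (lt_blockStart_iff _).1 hlt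
  -- `m ∈ X(σ)` makes `{x ≤ m}` `σ`-invariant, so `σ k ≤ m` forces `k ≤ m`.
  have hdown : ∀ x : Fin n, (x : ℕ) ≤ m → (σ x : ℕ) ≤ m := by
    intro x hx
    by_cases hxX : x ∈ nonExcedances σ
    · exact (mem_nonExcedances.1 hxX).trans hx
    · have : (x : ℕ) ≠ m := fun h => hxX (Fin.ext h ▸ hm)
      rw [apply_eq_succ_of_notMem_nonExcedances hσ hxX]
      omega
  have : (k : ℕ) ≤ m := by simpa using Equiv.Perm.perm_symm_on_of_perm_on_finite hdown hkm
  omega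

lemma apply_eq_cycleBlocks (hσ : ∀ k, (σ k : ℕ) ≤ k + 1) (k : Fin n) :
    (σ k : ℕ) = cycleBlocks (nonExcedances σ) k := by
  unfold cycleBlocks
  split_ifs with hk
  · exact le_antisymm (apply_le_blockStart hσ hk) (blockStart_le_apply hσ k)
  · exact apply_eq_succ_of_notMem_nonExcedances hσ hk

end Perm

lemma nonExcedances_cycleBlocksPerm (S : Finset (Fin n))
    (hlast : ∀ k : Fin n, (k : ℕ) + 1 = n → k ∈ S) :
    nonExcedances (cycleBlocksPerm S hlast) = S := by
  ext k
  rw [mem_nonExcedances, cycleBlocksPerm_apply_val, cycleBlocks_le_iff]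

end MillerBijection

open MillerBijection in
/-- The map `σ ↦ X(σ) = {k : σ(k) ≤ k}` is a bijection between the set of
permutations of `{1,…,n}` (modeled as `Fin n`) satisfying `σ(k) ≤ k+1` for
all `k`, and the set of subsets of `{1,…,n}` containing `n` (the largest
element of `Fin n`). -/
theorem miller_remark_bijection (n : ℕ) (hn : 0 < n) :
    Set.BijOn (fun σ : Equiv.Perm (Fin n) =>
        Finset.univ.filter (fun k : Fin n => (σ k : ℕ) ≤ (k : ℕ)))
      {σ : Equiv.Perm (Fin n) | ∀ k : Fin n, (σ k : ℕ) ≤ (k : ℕ) + 1}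
      {S : Finset (Fin n) | (⟨n - 1, by omega⟩ : Fin n) ∈ S} := by
  change Set.BijOn nonExcedances _ _
  refine ⟨fun σ _ => ?_, fun σ hσ τ hτ h => ?_, fun S hS => ?_⟩
  · show _ ∈ nonExcedances σ
    rw [mem_nonExcedances]
    exact Nat.le_sub_one_of_lt (σ _).isLt
  · refine Equiv.ext fun k => Fin.ext ?_
    rw [apply_eq_cycleBlocks hσ, apply_eq_cycleBlocks hτ, h]
  · have hlast : ∀ k : Fin n, (k : ℕ) + 1 = n → k ∈ S := fun k hk => by
      rwa [show k = ⟨n - 1, by omega⟩ from Fin.ext (show (k : ℕ) = n - 1 by omega)]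
    exact ⟨cycleBlocksPerm S hlast, cycleBlocks_le_succ S,
      nonExcedances_cycleBlocksPerm S hlast⟩
end

section
/- (Generalized Trudi formula) Let A = [a_{i,j}] be an n×n complex Hessenberg matrix, i.e., a_{i,j} = 0 whenever j > i+1. Then det(A) = Σ_{l=1}^{n} (-1)^{n-l} Σ_{{s₁<...<s_l} ⊆ [n], s_l = n} ( Π_{q=1}^{l} a_{s_q, s_{q-1}+1} · Π_{k ∈ [n] \ {s₁,...,s_l}} a_{k,k+1} ), where s₀ := 0. -/
/-!
Expanding the determinant `D n` of the leading `n × n` block along its last row, the minor of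
the entry `a n m` is block lower triangular: the leading `(m - 1) × (m - 1)` block, followed by a
lower triangular block with diagonal `a k (k + 1)`, `m ≤ k < n`. Hence
`D n = ∑ m, (-1) ^ (n - m) a n m (∏_{m ≤ k < n} a k (k + 1)) D (m - 1)` with `D 0 = 1`.
The right-hand side obeys the same recursion: remove `s_l = n` from `S` and group the remaining
sets by their largest element `s_{l-1} = m - 1`.
-/

open Finset

section Combinatorics

theorem Finset.sort_insert_of_forall_lt {α : Type*} [LinearOrder α] {T : Finset α} {b : α}
    (hb : ∀ x ∈ T, x < b) : (insert b T).sort = T.sort ++ [b] := by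
  have hlt : (T.sort ++ [b]).Pairwise (· < ·) := by
    refine List.pairwise_append.2 ⟨T.sortedLT_sort.pairwise, List.pairwise_singleton _ _, ?_⟩
    intro x hx y hy
    rw [List.eq_of_mem_singleton hy]
    exact hb x ((mem_sort _).1 hx)
  calc (insert b T).sort = (T.sort ++ [b]).toFinset.sort := by
        congr 1; ext; simp
    _ = T.sort ++ [b] := by
        rw [List.toFinset_sort _ (List.Pairwise.imp ne_of_lt hlt)]
        exact hlt.imp le_of_lt

theorem Finset.getLastD_sort {α : Type*} [LinearOrder α] [OrderBot α] (S : Finset α) :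
    S.sort.getLastD ⊥ = S.sup id := by
  rcases S.eq_empty_or_nonempty with rfl | hS
  · simp
  · have hlen : S.sort.length - 1 < S.sort.length := by simpa using hS.card_pos
    rw [List.getLastD_eq_getLast?, List.getLast?_eq_getElem?, List.getElem?_eq_getElem hlen,
      Option.getD_some, sorted_last_eq_max', max'_eq_sup', sup'_eq_sup]

theorem filter_powerset_Icc_sup_eq {m n : ℕ} (hmn : m ≤ n) :
    {T ∈ (Icc 1 n).powerset | T.sup id = m} = {T ∈ (Icc 1 m).powerset | T.sup id = m} := by
  ext T
  simp only [mem_filter, mem_powerset, and_congr_left_iff]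
  intro hTm
  refine ⟨fun hT x hx => ?_, fun hT => hT.trans (Icc_subset_Icc_right hmn)⟩
  have := le_sup (f := id) hx
  have := mem_Icc.1 (hT hx)
  simp only [id, hTm] at *
  exact mem_Icc.2 ⟨by omega, by omega⟩

variable {M : Type*} [CommMonoid M]

/-- `∏_q a s_q (s_{q-1} + 1)` over the entries `s_1, s_2, …` of `L`, with `s_0 = 0`. -/
def chainProd (a : ℕ → ℕ → M) (L : List ℕ) : M :=
  ∏ q ∈ range L.length, a (L.getD q 0) ((if q = 0 then 0 else L.getD (q - 1) 0) + 1)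

theorem chainProd_append_singleton (a : ℕ → ℕ → M) (L : List ℕ) (b : ℕ) :
    chainProd a (L ++ [b]) = chainProd a L * a b (L.getLastD 0 + 1) := by
  rw [chainProd, List.length_append, List.length_singleton, prod_range_succ, chainProd]
  congr 1
  · refine prod_congr rfl fun q hq => ?_
    have hq := mem_range.1 hq
    rw [List.getD_append _ _ _ _ hq]
    split_ifs
    · rfl
    · rw [List.getD_append _ _ _ _ (by omega)]
  · rw [List.getD_append_right _ _ _ _ le_rfl, Nat.sub_self, List.getD_cons_zero]
    rcases L.eq_nil_or_concat with rfl | ⟨L', c, rfl⟩ <;> simp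

end Combinatorics

def IsLowerHessenberg {α : Type*} [Zero α] (a : ℕ → ℕ → α) (n : ℕ) : Prop :=
  ∀ i j : ℕ, 1 ≤ i → i ≤ n → 1 ≤ j → j ≤ n → i + 1 < j → a i j = 0

theorem IsLowerHessenberg.mono {α : Type*} [Zero α] {a : ℕ → ℕ → α} {m n : ℕ}
    (ha : IsLowerHessenberg a n) (hmn : m ≤ n) : IsLowerHessenberg a m :=
  fun i j hi hin hj hjn hij => ha i j hi (hin.trans hmn) hj (hjn.trans hmn) hij

def principalMatrix {α : Type*} (a : ℕ → ℕ → α) (n : ℕ) : Matrix (Fin n) (Fin n) α :=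
  Matrix.of fun i j => a (i + 1) (j + 1)

/-- Rows `1, …, n` of `principalMatrix a (n + 1)` with column `j + 1` deleted. -/
def deleteColMatrix {α : Type*} (a : ℕ → ℕ → α) (j n : ℕ) : Matrix (Fin n) (Fin n) α :=
  Matrix.of fun i k => a (i + 1) (if (k : ℕ) < j then k + 1 else k + 2)

theorem deleteColMatrix_self {α : Type*} (a : ℕ → ℕ → α) (n : ℕ) :
    deleteColMatrix a n n = principalMatrix a n := by
  ext i k
  simp [deleteColMatrix, principalMatrix]

theorem principalMatrix_submatrix_last_succAbove {α : Type*} (a : ℕ → ℕ → α) (n : ℕ)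
    (j : Fin (n + 1)) :
    (principalMatrix a (n + 1)).submatrix (Fin.last n).succAbove j.succAbove =
      deleteColMatrix a j n := by
  ext i k
  rcases lt_or_ge k.castSucc j with h | h
  · simp [principalMatrix, deleteColMatrix, Fin.succAbove_of_castSucc_lt _ _ h,
      show (k : ℕ) < j from h]
  · simp [principalMatrix, deleteColMatrix, Fin.succAbove_of_le_castSucc _ _ h,
      show ¬ (k : ℕ) < j from not_lt.2 h]

section CommRing

variable {R : Type*} [CommRing R]

theorem neg_one_pow_add_eq_pow_sub {m n : ℕ} (hmn : m ≤ n) :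
    (-1 : R) ^ (n + m) = (-1) ^ (n - m) := by
  rw [show n + m = n - m + 2 * m by omega, pow_add, pow_mul, neg_one_sq, one_pow, mul_one]

theorem det_deleteColMatrix_succ {a : ℕ → ℕ → R} {j n : ℕ} (ha : IsLowerHessenberg a (n + 2))
    (hjn : j ≤ n) :
    (deleteColMatrix a j (n + 1)).det = a (n + 1) (n + 2) * (deleteColMatrix a j n).det := by
  rw [Matrix.det_succ_column _ (Fin.last n), Fin.sum_univ_castSucc, sum_eq_zero, zero_add]
  · have hminor : ((deleteColMatrix a j (n + 1)).submatrix (Fin.last n).succAbove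
        (Fin.last n).succAbove) = deleteColMatrix a j n := by
      ext i k
      simp [deleteColMatrix]
    rw [hminor]
    simp [deleteColMatrix, show ¬ n < j by omega]
  · intro i _
    have hi := i.isLt
    have : a (i + 1) (n + 2) = 0 := ha _ _ (by omega) (by omega) (by omega) le_rfl (by omega)
    simp [deleteColMatrix, show ¬ n < j by omega, this]

theorem det_deleteColMatrix {a : ℕ → ℕ → R} {j n : ℕ} (ha : IsLowerHessenberg a (n + 1))
    (hjn : j ≤ n) :
    (deleteColMatrix a j n).det =
      (principalMatrix a j).det * ∏ k ∈ Ico (j + 1) (n + 1), a k (k + 1) := by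
  induction n, hjn using Nat.le_induction with
  | base => simp [deleteColMatrix_self]
  | succ n hjn ih =>
    rw [det_deleteColMatrix_succ ha hjn, ih (ha.mono (by omega)),
      prod_Ico_succ_top (a := j + 1) (b := n + 1) (by omega)]
    ring

theorem det_principalMatrix_succ {a : ℕ → ℕ → R} {n : ℕ} (ha : IsLowerHessenberg a (n + 1)) :
    (principalMatrix a (n + 1)).det = ∑ m ∈ range (n + 1),
      (-1) ^ (n - m) * a (n + 1) (m + 1) * (∏ k ∈ Ico (m + 1) (n + 1), a k (k + 1)) *
        (principalMatrix a m).det := by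
  rw [Matrix.det_succ_row _ (Fin.last n), ← Fin.sum_univ_eq_sum_range]
  refine sum_congr rfl fun j _ => ?_
  rw [principalMatrix_submatrix_last_succAbove, det_deleteColMatrix ha j.is_le, Fin.val_last,
    neg_one_pow_add_eq_pow_sub j.is_le]
  simp only [principalMatrix, Matrix.of_apply, Fin.val_last]
  ring

def trudiTerm (a : ℕ → ℕ → R) (n : ℕ) (S : Finset ℕ) : R :=
  (-1) ^ (n - #S) * (chainProd a S.sort * ∏ k ∈ Icc 1 n \ S, a k (k + 1))

/-- `S.sup id` is `max S` with `max ∅ = 0` (the convention `s₀ = 0`), so `trudiSum a 0 = 1`. -/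
def trudiSum (a : ℕ → ℕ → R) (n : ℕ) : R :=
  ∑ S ∈ (Icc 1 n).powerset with S.sup id = n, trudiTerm a n S

theorem trudiTerm_insert (a : ℕ → ℕ → R) {m n : ℕ} {T : Finset ℕ} (hmn : m ≤ n)
    (hT : T ⊆ Icc 1 m) (hTm : T.sup id = m) :
    trudiTerm a (n + 1) (insert (n + 1) T) =
      (-1) ^ (n - m) * a (n + 1) (m + 1) * (∏ k ∈ Ico (m + 1) (n + 1), a k (k + 1)) *
        trudiTerm a m T := by
  have hle : ∀ x ∈ T, x ≤ m := fun x hx => (mem_Icc.1 (hT hx)).2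
  have hlt : ∀ x ∈ T, x < n + 1 := fun x hx => by have := hle x hx; omega
  have hnT : n + 1 ∉ T := fun h => lt_irrefl _ (hlt _ h)
  have hcard : #T ≤ m := by simpa using card_le_card hT
  have hsign : (-1 : R) ^ (n + 1 - #(insert (n + 1) T)) = (-1) ^ (n - m) * (-1) ^ (m - #T) := by
    rw [card_insert_of_notMem hnT, ← pow_add]
    congr 1
    omega
  have hchain : chainProd a (insert (n + 1) T).sort = chainProd a T.sort * a (n + 1) (m + 1) := by
    rw [sort_insert_of_forall_lt hlt, chainProd_append_singleton, ← Nat.bot_eq_zero,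
      getLastD_sort, hTm]
  have hcompl : Icc 1 (n + 1) \ insert (n + 1) T = (Icc 1 m \ T) ∪ Ico (m + 1) (n + 1) := by
    ext x
    by_cases hx : x ∈ T
    · have := hle x hx
      simp only [mem_sdiff, mem_Icc, mem_insert, hx, or_true, not_true_eq_false, and_false,
        mem_union, mem_Ico, false_or, false_iff, not_and]
      omega
    · simp only [mem_sdiff, mem_Icc, mem_insert, mem_union, mem_Ico, hx, or_false,
        not_false_eq_true, and_true]
      omega
  have hdisj : Disjoint (Icc 1 m \ T) (Ico (m + 1) (n + 1)) :=
    disjoint_left.2 fun x hx hx' => by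
      simp only [mem_sdiff, mem_Icc, mem_Ico] at hx hx'
      omega
  rw [trudiTerm, trudiTerm, hsign, hchain, hcompl, prod_union hdisj]
  ring

theorem trudiSum_succ (a : ℕ → ℕ → R) (n : ℕ) :
    trudiSum a (n + 1) = ∑ m ∈ range (n + 1),
      (-1) ^ (n - m) * a (n + 1) (m + 1) * (∏ k ∈ Ico (m + 1) (n + 1), a k (k + 1)) *
        trudiSum a m := by
  have hsup : ∀ T ∈ (Icc 1 n).powerset, T.sup id ≤ n :=
    fun T hT => Finset.sup_le fun x hx => (mem_Icc.1 (mem_powerset.1 hT hx)).2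
  have hinsert : trudiSum a (n + 1) =
      ∑ T ∈ (Icc 1 n).powerset, trudiTerm a (n + 1) (insert (n + 1) T) := by
    rw [trudiSum, sum_filter, ← insert_Icc_right_eq_Icc_add_one (by omega),
      sum_powerset_insert (by simp), sum_eq_zero, zero_add]
    · refine sum_congr rfl fun T hT => if_pos ?_
      rw [sup_insert]
      exact max_eq_left (by simpa using (hsup T hT).trans n.le_succ)
    · intro T hT
      have := hsup T hT
      rw [if_neg (by omega)]
  rw [hinsert, ← sum_fiberwise_of_maps_to (g := fun T => T.sup id) (t := range (n + 1))
    fun T hT => mem_range.2 (Nat.lt_succ_of_le (hsup T hT))]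
  refine sum_congr rfl fun m hm => ?_
  have hmn : m ≤ n := Nat.le_of_lt_succ (mem_range.1 hm)
  rw [filter_powerset_Icc_sup_eq hmn, trudiSum, mul_sum]
  refine sum_congr rfl fun T hT => ?_
  obtain ⟨hT, hTm⟩ := mem_filter.1 hT
  exact trudiTerm_insert a hmn (mem_powerset.1 hT) hTm

theorem det_principalMatrix_eq_trudiSum {a : ℕ → ℕ → R} {n : ℕ} (ha : IsLowerHessenberg a n) :
    (principalMatrix a n).det = trudiSum a n := by
  induction n using Nat.strong_induction_on with
  | _ n ih =>
    cases n with
    | zero => simp [trudiSum, trudiTerm, chainProd, filter_singleton]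
    | succ n =>
      rw [det_principalMatrix_succ ha, trudiSum_succ]
      refine sum_congr rfl fun m hm => ?_
      have hmn := mem_range.1 hm
      rw [ih m (by omega) (ha.mono (by omega))]

theorem trudiSum_eq_sum_card (a : ℕ → ℕ → R) {n : ℕ} (hn : 0 < n) :
    trudiSum a n = ∑ l ∈ Icc 1 n, (-1) ^ (n - l) *
      ∑ S ∈ (Icc 1 n).powerset with n ∈ S ∧ #S = l,
        chainProd a S.sort * ∏ k ∈ Icc 1 n \ S, a k (k + 1) := by
  have hsup : ∀ S ∈ (Icc 1 n).powerset, S.sup id = n ↔ n ∈ S := by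
    intro S hS
    refine ⟨fun h => ?_, fun h => le_antisymm
      (Finset.sup_le fun x hx => (mem_Icc.1 (mem_powerset.1 hS hx)).2) (le_sup (f := id) h)⟩
    have hS : S.Nonempty := nonempty_of_ne_empty fun hS => hn.ne (by simpa [hS] using h)
    obtain ⟨x, hx, hxS⟩ := exists_mem_eq_sup S hS id
    exact h ▸ hxS ▸ hx
  have hcard : ∀ S ∈ {S ∈ (Icc 1 n).powerset | n ∈ S}, #S ∈ Icc 1 n := by
    intro S hS
    obtain ⟨hS, hnS⟩ := mem_filter.1 hS
    exact mem_Icc.2 ⟨card_pos.2 ⟨n, hnS⟩, by simpa using card_le_card (mem_powerset.1 hS)⟩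
  rw [trudiSum, filter_congr hsup, ← sum_fiberwise_of_maps_to hcard]
  refine sum_congr rfl fun l _ => ?_
  rw [filter_filter, mul_sum]
  refine sum_congr rfl fun S hS => ?_
  rw [trudiTerm, (mem_filter.1 hS).2.2]

end CommRing

/-- **Generalized Trudi formula.**  Let `A = [a_{i,j}]` (entries given by a
`1`-indexed function `a`) be an `n × n` complex lower Hessenberg matrix,
i.e. `a_{i,j} = 0` whenever `j > i + 1`.  Then
`det A = ∑_{l=1}^n (-1)^{n-l} ∑_{{s₁<…<s_l}⊆[n], s_l = n}
  (∏_{q=1}^l a_{s_q, s_{q-1}+1}) · ∏_{k ∈ [n]∖{s₁,…,s_l}} a_{k,k+1}`,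
with the convention `s₀ = 0`.  The inner sum runs over the subsets
`S ⊆ {1,…,n}` with `n ∈ S` and `#S = l`, listed increasingly. -/
theorem generalized_trudi_formula (n : ℕ) (hn : 0 < n) (a : ℕ → ℕ → ℂ)
    (ha : ∀ i j : ℕ, 1 ≤ i → i ≤ n → 1 ≤ j → j ≤ n → i + 1 < j → a i j = 0) :
    (Matrix.of fun i j : Fin n => a ((i : ℕ) + 1) ((j : ℕ) + 1)).det =
      ∑ l ∈ Finset.Icc 1 n, (-1 : ℂ) ^ (n - l) *
        ∑ S ∈ (Finset.Icc 1 n).powerset.filter (fun S => n ∈ S ∧ S.card = l),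
          ((∏ q ∈ Finset.range l,
              a ((S.sort (· ≤ ·)).getD q 0)
                ((if q = 0 then 0 else (S.sort (· ≤ ·)).getD (q - 1) 0) + 1)) *
            ∏ k ∈ Finset.Icc 1 n \ S, a k (k + 1)) := by
  rw [← principalMatrix, det_principalMatrix_eq_trudiSum ha, trudiSum_eq_sum_card a hn]
  refine sum_congr rfl fun l _ => congrArg _ (sum_congr rfl fun S hS => ?_)
  rw [chainProd, length_sort, (mem_filter.1 hS).2.2]
end

section
/- Let n be a positive integer and B = [b_{i,j}] the n×n lower-triangular complex matrix with b_{i,i} = 1, b_{i,j} = 0 for i < j, and b_{i,j} = -((i-j)a - j) b_{i-j} / (i(1+b₀)) for i > j, where a ∈ ℂ, 1+b₀ ≠ 0, and (b_k) are complex numbers. Then for i < j, the (i,j)-cofactor of B equals B_i^j = Σ_{l=1}^{j-i} (1+b₀)^{-l} Σ_{{s₁<...<s_l}⊆[j-i], s_l=j-i} Π_{q=1}^{l} ((s_q - s_{q-1})a - s_{q-1} - i)/(s_q + i) · b_{s_q - s_{q-1}}, with s₀ := 0. -/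
/-!
Since `B` is unipotent lower-triangular, `det B = 1`, so the cofactor `B_i^j` is the `(j, i)` entry
of `adj B = B⁻¹`. The inverse of a unipotent lower-triangular matrix is a sum over chains
`i = k₀ < k₁ < ⋯ < k_l = j` of `∏ (-B_{k_q, k_{q-1}})`; writing `k_q = i + s_q`, each factor
`-B_{i+s_q, i+s_{q-1}}` is `(1 + b₀)⁻¹` times the factor of the formula. That the chain sums
invert `B` is the recursion obtained by splitting off the last step of a chain.
-/
open Finset

namespace MillerCofactor

section Chains

variable {R : Type*} [CommSemiring R] (w : ℕ → ℕ → R)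

def chainProd : ℕ → List ℕ → R
  | _, [] => 1
  | p, s :: t => w s p * chainProd s t

theorem prod_range_getD_eq_chainProd :
    ∀ (L : List ℕ) (p : ℕ), ∏ q ∈ range L.length,
      w (L.getD q 0) (if q = 0 then p else L.getD (q - 1) 0) = chainProd w p L
  | [], _ => rfl
  | s :: t, p => by
    rw [List.length_cons, prod_range_succ', chainProd, ← prod_range_getD_eq_chainProd t s,
      mul_comm]
    simp only [List.getD_cons_succ, List.getD_cons_zero, Nat.add_one_ne_zero, if_false,
      if_true, Nat.add_sub_cancel]
    congr 1
    refine prod_congr rfl fun q _ => ?_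
    rcases q with _ | q <;> simp

theorem chainProd_concat :
    ∀ (L : List ℕ) (p x : ℕ), chainProd w p (L ++ [x]) = chainProd w p L * w x (L.getLastD p)
  | [], _, _ => by simp [chainProd]
  | s :: t, p, x => by
    simp only [List.cons_append, chainProd, chainProd_concat t, List.getLastD_cons, mul_assoc]

theorem chainProd_const_mul (c : R) :
    ∀ (L : List ℕ) (p : ℕ),
      chainProd (fun s q => c * w s q) p L = c ^ L.length * chainProd w p L
  | [], _ => by simp [chainProd]
  | s :: t, p => by
    simp only [chainProd, chainProd_const_mul c t, List.length_cons, pow_succ]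
    ring

theorem sort_insert_of_forall_lt {S : Finset ℕ} {D : ℕ} (h : ∀ x ∈ S, x < D) :
    (insert D S).sort (· ≤ ·) = S.sort (· ≤ ·) ++ [D] := by
  have hlist : (S.sort (· ≤ ·) ++ [D]).toFinset = insert D S := by
    ext; simp
  rw [← hlist, List.toFinset_sort]
  · simpa [List.pairwise_append] using fun x hx => (h x hx).le
  · simpa [List.nodup_append] using fun x hx => (h x hx).ne

/-- The sum over chains `0 = s₀ < s₁ < ⋯ < s_l = D`, each encoded by the set `{s₁, …, s_l}`. -/
def chainSum (D : ℕ) : R :=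
  ∑ S ∈ (Icc 1 D).powerset with D ∈ S, chainProd w 0 (S.sort (· ≤ ·))

theorem chainSum_succ_eq_sum_powerset (E : ℕ) :
    chainSum w (E + 1) =
      ∑ T ∈ (Icc 1 E).powerset, chainProd w 0 (T.sort (· ≤ ·) ++ [E + 1]) := by
  have hE : E + 1 ∉ Icc 1 E := by simp
  rw [chainSum, sum_filter, ← insert_Icc_right_eq_Icc_add_one (by omega), sum_powerset_insert hE]
  rw [sum_eq_zero fun T hT => if_neg fun h => hE (mem_powerset.1 hT h), zero_add]
  refine sum_congr rfl fun T hT => ?_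
  rw [if_pos (mem_insert_self _ _), sort_insert_of_forall_lt]
  intro x hx
  have := mem_Icc.1 (mem_powerset.1 hT hx)
  omega

theorem sum_powerset_chainProd_concat {D : ℕ} :
    ∀ E < D, ∑ T ∈ (Icc 1 E).powerset, chainProd w 0 (T.sort (· ≤ ·) ++ [D]) =
      w D 0 + ∑ e ∈ range E, w D (e + 1) * chainSum w (e + 1)
  | 0, _ => by simp [chainProd]
  | E + 1, hE => by
    have hnot : E + 1 ∉ Icc 1 E := by simp
    rw [← insert_Icc_right_eq_Icc_add_one (by omega), sum_powerset_insert hnot,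
      sum_powerset_chainProd_concat E (by omega), sum_range_succ, add_assoc,
      chainSum_succ_eq_sum_powerset, mul_sum]
    congr 2
    refine sum_congr rfl fun T hT => ?_
    have hlt : ∀ x ∈ T, x < E + 1 := fun x hx => by
      have := mem_Icc.1 (mem_powerset.1 hT hx)
      omega
    rw [sort_insert_of_forall_lt hlt, chainProd_concat, List.getLastD_concat, mul_comm]

theorem chainSum_succ (E : ℕ) :
    chainSum w (E + 1) =
      w (E + 1) 0 + ∑ e ∈ range E, w (E + 1) (e + 1) * chainSum w (e + 1) := by
  rw [chainSum_succ_eq_sum_powerset, sum_powerset_chainProd_concat w E (Nat.lt_succ_self E)]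

theorem chainSum_const_mul (c : R) (D : ℕ) :
    chainSum (fun s p => c * w s p) D = ∑ l ∈ Icc 1 D, c ^ l *
      ∑ S ∈ (Icc 1 D).powerset with D ∈ S ∧ S.card = l,
        chainProd w 0 (S.sort (· ≤ ·)) := by
  have hcard : ∀ S ∈ (Icc 1 D).powerset.filter (D ∈ ·), S.card ∈ Icc 1 D := fun S hS => by
    rw [mem_filter, mem_powerset] at hS
    have hle := card_le_card hS.1
    simp only [Nat.card_Icc, Nat.add_sub_cancel] at hle
    exact mem_Icc.2 ⟨card_pos.2 ⟨D, hS.2⟩, hle⟩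
  rw [chainSum, ← sum_fiberwise_of_maps_to hcard]
  refine sum_congr rfl fun l _ => ?_
  rw [filter_filter, mul_sum]
  refine sum_congr rfl fun S hS => ?_
  rw [chainProd_const_mul, length_sort, (mem_filter.1 hS).2.2]

end Chains

section LowerUnitriangular

variable {R : Type*} [CommRing R]

def lowerUnitriangular (β : ℕ → ℕ → R) (i j : ℕ) : R :=
  if i = j then 1 else if i < j then 0 else β i j

theorem lowerUnitriangular_of_lt (β : ℕ → ℕ → R) {i j : ℕ} (h : i < j) :
    lowerUnitriangular β i j = 0 := by
  simp [lowerUnitriangular, h, h.ne]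

theorem lowerUnitriangular_of_gt (β : ℕ → ℕ → R) {i j : ℕ} (h : j < i) :
    lowerUnitriangular β i j = β i j := by
  simp [lowerUnitriangular, h.ne', h.not_gt]

theorem sum_lowerUnitriangular_mul {β γ : ℕ → ℕ → R}
    (hγ : ∀ x z, z < x → γ x z = -∑ k ∈ Ico z x, β x k * lowerUnitriangular γ k z)
    {n x z : ℕ} (hx : x < n) :
    ∑ k ∈ range n, lowerUnitriangular β x k * lowerUnitriangular γ k z =
      if x = z then 1 else 0 := by
  have hvanish : ∀ k ∉ Icc z x, lowerUnitriangular β x k * lowerUnitriangular γ k z = 0 := by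
    intro k hk
    rw [mem_Icc, not_and_or, not_le, not_le] at hk
    rcases hk with hk | hk
    · rw [lowerUnitriangular_of_lt γ hk, mul_zero]
    · rw [lowerUnitriangular_of_lt β hk, zero_mul]
  have hsub : Icc z x ⊆ range n := fun k hk => mem_range.2 ((mem_Icc.1 hk).2.trans_lt hx)
  rw [← sum_subset hsub fun k _ hk => hvanish k hk]
  rcases lt_trichotomy x z with h | rfl | h
  · rw [Icc_eq_empty_of_lt h, sum_empty, if_neg h.ne]
  · simp [lowerUnitriangular]
  · rw [← Ico_insert_right h.le, sum_insert right_notMem_Ico, if_neg h.ne',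
      lowerUnitriangular_of_gt γ h, hγ x z h, lowerUnitriangular, if_pos rfl, one_mul,
      neg_add_eq_zero]
    exact sum_congr rfl fun k hk => by rw [lowerUnitriangular_of_gt β (mem_Ico.1 hk).2]

def lowerUnitriangularMatrix (n : ℕ) (β : ℕ → ℕ → R) : Matrix (Fin n) (Fin n) R :=
  Matrix.of fun i j => lowerUnitriangular β i j

@[simp]
theorem lowerUnitriangularMatrix_apply (n : ℕ) (β : ℕ → ℕ → R) (i j : Fin n) :
    lowerUnitriangularMatrix n β i j = lowerUnitriangular β i j :=
  rfl

theorem det_lowerUnitriangularMatrix (n : ℕ) (β : ℕ → ℕ → R) :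
    (lowerUnitriangularMatrix n β).det = 1 := by
  have hlower : (lowerUnitriangularMatrix n β).IsLowerTriangular := fun i j (h : i < j) =>
    lowerUnitriangular_of_lt β (Fin.lt_def.1 h)
  rw [Matrix.det_of_isLowerTriangular _ hlower]
  exact prod_eq_one fun i _ => if_pos rfl

theorem lowerUnitriangularMatrix_mul {β γ : ℕ → ℕ → R}
    (hγ : ∀ x z, z < x → γ x z = -∑ k ∈ Ico z x, β x k * lowerUnitriangular γ k z) (n : ℕ) :
    lowerUnitriangularMatrix n β * lowerUnitriangularMatrix n γ = 1 := by
  ext x z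
  have hsum := (Fin.sum_univ_eq_sum_range (fun k => lowerUnitriangular β x k *
    lowerUnitriangular γ k z) n).trans (sum_lowerUnitriangular_mul hγ x.isLt)
  simpa [Matrix.mul_apply, Matrix.one_apply, Fin.val_inj] using hsum

theorem _root_.Matrix.adjugate_eq_of_det_eq_one_of_mul_eq_one {n : Type*} [Fintype n]
    [DecidableEq n] {A B : Matrix n n R} (hdet : A.det = 1) (hAB : A * B = 1) : A.adjugate = B := by
  rw [← Matrix.inv_eq_right_inv hAB, Matrix.inv_def, hdet, Ring.inverse_one, one_smul]

theorem adjugate_lowerUnitriangularMatrix {β γ : ℕ → ℕ → R}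
    (hγ : ∀ x z, z < x → γ x z = -∑ k ∈ Ico z x, β x k * lowerUnitriangular γ k z) (n : ℕ) :
    (lowerUnitriangularMatrix n β).adjugate = lowerUnitriangularMatrix n γ :=
  Matrix.adjugate_eq_of_det_eq_one_of_mul_eq_one (det_lowerUnitriangularMatrix n β)
    (lowerUnitriangularMatrix_mul hγ n)

end LowerUnitriangular

section Miller

variable (a b0 : ℂ) (b : ℕ → ℂ)

/-! With `0`-based indices, `millerEntry i j` is the paper's `b_{i+1,j+1}` for `i > j`, and
`millerStep z` is the factor of the formula for the (`1`-based) row `z + 1`. -/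

noncomputable def millerEntry (i j : ℕ) : ℂ :=
  -(((i - j : ℕ) : ℂ) * a - ((j + 1 : ℕ) : ℂ)) * b (i - j) /
    (((i + 1 : ℕ) : ℂ) * (1 + b0))

noncomputable def millerStep (z s p : ℕ) : ℂ :=
  (((s : ℂ) - (p : ℂ)) * a - (p : ℂ) - ((z + 1 : ℕ) : ℂ)) / ((s : ℂ) + ((z + 1 : ℕ) : ℂ)) *
    b (s - p)

theorem inv_mul_millerStep_eq_neg_millerEntry {z s p : ℕ} (h : p ≤ s) :
    (1 + b0)⁻¹ * millerStep a b z s p = -millerEntry a b0 b (z + s) (z + p) := by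
  have hden : ((z + s + 1 : ℕ) : ℂ) = (s : ℂ) + ((z + 1 : ℕ) : ℂ) := by push_cast; ring
  rw [millerEntry, millerStep, Nat.add_sub_add_left, hden, Nat.cast_sub h]
  push_cast
  simp only [div_eq_mul_inv, mul_inv]
  ring

/-- The `(x, z)` entry of `B⁻¹` for `z < x`, as a chain sum in coordinates relative to `z`. -/
noncomputable def millerInverse (x z : ℕ) : ℂ :=
  chainSum (fun s p => (1 + b0)⁻¹ * millerStep a b z s p) (x - z)

theorem millerInverse_eq_neg_sum (x z : ℕ) (h : z < x) :
    millerInverse a b0 b x z = -∑ k ∈ Ico z x,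
      millerEntry a b0 b x k * lowerUnitriangular (millerInverse a b0 b) k z := by
  obtain ⟨E, rfl⟩ : ∃ E, x = z + (E + 1) := ⟨x - z - 1, by omega⟩
  rw [millerInverse, Nat.add_sub_cancel_left, chainSum_succ, sum_Ico_eq_sum_range,
    Nat.add_sub_cancel_left, sum_range_succ', neg_add_rev]
  congr 1
  · rw [inv_mul_millerStep_eq_neg_millerEntry a b0 b (Nat.zero_le _), add_zero,
      lowerUnitriangular, if_pos rfl, mul_one]
  · rw [← sum_neg_distrib]
    refine sum_congr rfl fun e he => ?_
    rw [inv_mul_millerStep_eq_neg_millerEntry a b0 b (by simp at he; omega),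
      lowerUnitriangular_of_gt _ (by omega), millerInverse, Nat.add_sub_cancel_left, neg_mul]

end Miller

end MillerCofactor

open MillerCofactor in
theorem jcp_miller_matrix_cofactor_general (m : ℕ) (a b0 : ℂ)
    (b : ℕ → ℂ) (B : Matrix (Fin (m + 1)) (Fin (m + 1)) ℂ)
    (hB : ∀ i j : Fin (m + 1), B i j =
      if (i : ℕ) = (j : ℕ) then 1
      else if (i : ℕ) < (j : ℕ) then 0
      else -((((i : ℕ) - (j : ℕ) : ℕ) : ℂ) * a - ((j : ℕ) + 1 : ℕ)) *
        b ((i : ℕ) - (j : ℕ)) / ((((i : ℕ) + 1 : ℕ) : ℂ) * (1 + b0))) :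
    ∀ i j : Fin (m + 1), (i : ℕ) < (j : ℕ) →
      (-1 : ℂ) ^ ((i : ℕ) + (j : ℕ)) *
          (B.submatrix i.succAbove j.succAbove).det =
        ∑ l ∈ Finset.Icc 1 ((j : ℕ) - (i : ℕ)), ((1 + b0) ^ l)⁻¹ *
          ∑ S ∈ (Finset.Icc 1 ((j : ℕ) - (i : ℕ))).powerset.filter
              (fun S => ((j : ℕ) - (i : ℕ)) ∈ S ∧ S.card = l),
            ∏ q ∈ Finset.range l,
              (fun sq sp : ℕ =>
                  ((((sq : ℂ) - (sp : ℂ)) * a - (sp : ℂ) - (((i : ℕ) + 1 : ℕ) : ℂ)) /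
                      ((sq : ℂ) + (((i : ℕ) + 1 : ℕ) : ℂ))) * b (sq - sp))
                ((S.sort (· ≤ ·)).getD q 0)
                (if q = 0 then 0 else (S.sort (· ≤ ·)).getD (q - 1) 0) := by
  intro i j hij
  have hBmat : B = lowerUnitriangularMatrix (m + 1) (millerEntry a b0 b) := Matrix.ext hB
  rw [← Matrix.adjugate_fin_succ_eq_det_submatrix, hBmat,
    adjugate_lowerUnitriangularMatrix (millerInverse_eq_neg_sum a b0 b),
    lowerUnitriangularMatrix_apply, lowerUnitriangular_of_gt _ hij, millerInverse,
    chainSum_const_mul]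
  refine sum_congr rfl fun l _ => ?_
  rw [inv_pow]
  congr 1
  refine sum_congr rfl fun S hS => ?_
  rw [← prod_range_getD_eq_chainProd, length_sort, (mem_filter.1 hS).2.2]
  rfl

/-- **Cofactors of the J.C.P. Miller matrix.**  Let `B` be the
`n × n` (`n = m+1`) unipotent lower-triangular complex matrix with
`1`-indexed entries `b_{i,i} = 1`, `b_{i,j} = 0` for `i < j` and
`b_{i,j} = -((i-j)a - j) b_{i-j} / (i(1+b₀))` for `i > j`.  Then for
`i < j` the `(i,j)`-cofactor of `B` (i.e. `(-1)^{i+j}` times the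
determinant of `B` with row `i` and column `j` deleted) equals
`∑_{l=1}^{j-i} (1+b₀)^{-l} ∑_{{s₁<…<s_l}⊆[j-i], s_l=j-i} ∏_{q=1}^l
  ((s_q-s_{q-1})a - s_{q-1} - i)/(s_q+i) · b_{s_q-s_{q-1}}`, with
`s₀ := 0`; the inner sum runs over subsets `S ⊆ {1,…,j-i}` with
`j-i ∈ S` and `#S = l`, listed increasingly.  Indices `i j : Fin (m+1)`
are `0`-based, so the `1`-indexed row/column numbers are `i+1`, `j+1`. -/
theorem jcp_miller_matrix_cofactor (m : ℕ) (a b0 : ℂ) (hb0 : 1 + b0 ≠ 0)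
    (b : ℕ → ℂ) (B : Matrix (Fin (m + 1)) (Fin (m + 1)) ℂ)
    (hB : ∀ i j : Fin (m + 1), B i j =
      if (i : ℕ) = (j : ℕ) then 1
      else if (i : ℕ) < (j : ℕ) then 0
      else -((((i : ℕ) - (j : ℕ) : ℕ) : ℂ) * a - ((j : ℕ) + 1 : ℕ)) *
        b ((i : ℕ) - (j : ℕ)) / ((((i : ℕ) + 1 : ℕ) : ℂ) * (1 + b0))) :
    ∀ i j : Fin (m + 1), (i : ℕ) < (j : ℕ) →
      (-1 : ℂ) ^ ((i : ℕ) + (j : ℕ)) *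
          (B.submatrix i.succAbove j.succAbove).det =
        ∑ l ∈ Finset.Icc 1 ((j : ℕ) - (i : ℕ)), ((1 + b0) ^ l)⁻¹ *
          ∑ S ∈ (Finset.Icc 1 ((j : ℕ) - (i : ℕ))).powerset.filter
              (fun S => ((j : ℕ) - (i : ℕ)) ∈ S ∧ S.card = l),
            ∏ q ∈ Finset.range l,
              (fun sq sp : ℕ =>
                  ((((sq : ℂ) - (sp : ℂ)) * a - (sp : ℂ) - (((i : ℕ) + 1 : ℕ) : ℂ)) /
                      ((sq : ℂ) + (((i : ℕ) + 1 : ℕ) : ℂ))) * b (sq - sp))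
                ((S.sort (· ≤ ·)).getD q 0)
                (if q = 0 then 0 else (S.sort (· ≤ ·)).getD (q - 1) 0) :=
  jcp_miller_matrix_cofactor_general m a b0 b B hB
end

section
/- Let a ∈ ℂ with Re(a) < 0. Then the binomial series Σ_{n≥0} C(a,n) z^n diverges at z = -1, i.e., the series Σ_{n≥0} (-1)^n C(a,n) does not converge. -/
/-!
By Pascal's rule `C(a, n) = C(a - 1, n) + C(a - 1, n - 1)` the alternating partial sums
telescope: `∑_{n ≤ N} (-1)^n C(a, n) = (-1)^N C(a - 1, N)`. For `b = a - 1` we have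
`Re b < -1`, so every factor of `|C(b, N)| = ∏_{i < N} |b - i| / (i + 1)` is at least
`1 + (-1 - Re b) / (i + 1)`, whence `|C(b, N)| ≥ 1 + (-1 - Re b) H_N → ∞`.
-/

open Filter Finset

/-- The generalized binomial coefficient `C(a,n) = a(a-1)⋯(a-n+1)/n!`. -/
noncomputable def cbinom (a : ℂ) (n : ℕ) : ℂ :=
  (∏ i ∈ Finset.range n, (a - (i : ℂ))) / (n.factorial : ℂ)

theorem cbinom_eq_choose (a : ℂ) (n : ℕ) : cbinom a n = Ring.choose a n := by
  rw [Ring.choose_eq_smul, ← Polynomial.aeval_eq_smeval, Polynomial.aeval_def,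
    Polynomial.eval₂_eq_eval_map, descPochhammer_map, descPochhammer_eval_eq_prod_range, cbinom,
    smul_eq_mul, div_eq_inv_mul]

theorem Ring.sum_range_succ_neg_one_pow_mul_choose {R : Type*} [CommRing R] [BinomialRing R]
    (r : R) (N : ℕ) :
    ∑ n ∈ range (N + 1), (-1) ^ n * choose r n = (-1) ^ N * choose (r - 1) N := by
  induction N with
  | zero => simp
  | succ N ih =>
    rw [sum_range_succ, ih]
    nth_rw 2 [← sub_add_cancel r 1]
    rw [choose_succ_succ]
    ring

theorem Finset.one_add_sum_le_prod_one_add {ι R : Type*} [CommSemiring R] [PartialOrder R]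
    [IsOrderedRing R] (s : Finset ι) {f : ι → R} (hf : ∀ i ∈ s, 0 ≤ f i) :
    1 + ∑ i ∈ s, f i ≤ ∏ i ∈ s, (1 + f i) := by
  induction s using Finset.cons_induction with
  | empty => simp
  | cons j s hj ih =>
    rw [sum_cons, prod_cons]
    have hfj : 0 ≤ f j := hf j (mem_cons_self j s)
    have hsum : 0 ≤ ∑ i ∈ s, f i := sum_nonneg fun i hi => hf i (mem_cons_of_mem hi)
    calc 1 + (f j + ∑ i ∈ s, f i) ≤ 1 + (f j + ∑ i ∈ s, f i) + f j * ∑ i ∈ s, f i :=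
          le_add_of_nonneg_right (mul_nonneg hfj hsum)
      _ = (1 + f j) * (1 + ∑ i ∈ s, f i) := by ring
      _ ≤ (1 + f j) * ∏ i ∈ s, (1 + f i) :=
          mul_le_mul_of_nonneg_left (ih fun i hi => hf i (mem_cons_of_mem hi))
            (add_nonneg zero_le_one hfj)

theorem norm_cbinom (b : ℂ) (N : ℕ) :
    ‖cbinom b N‖ = ∏ i ∈ range N, ‖b - i‖ / (i + 1) := by
  rw [cbinom, norm_div, norm_prod, prod_div_distrib, Complex.norm_natCast,
    ← prod_range_add_one_eq_factorial]
  push_cast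
  rfl

theorem one_add_mul_sum_le_norm_cbinom {b : ℂ} (hb : b.re ≤ -1) (N : ℕ) :
    1 + (-1 - b.re) * ∑ i ∈ range N, (1 / (i + 1) : ℝ) ≤ ‖cbinom b N‖ := by
  rw [norm_cbinom, mul_sum]
  refine (one_add_sum_le_prod_one_add _ fun i _ => by positivity).trans <|
    prod_le_prod (fun i _ => by positivity) fun i _ => ?_
  have hre : (i : ℝ) - b.re ≤ ‖b - i‖ := by
    simpa using (neg_le_abs _).trans (Complex.abs_re_le_norm (b - i))
  calc 1 + (-1 - b.re) * (1 / (i + 1)) = (i - b.re) / (i + 1) := by field_simp; ring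
    _ ≤ ‖b - i‖ / (i + 1) := by gcongr

theorem tendsto_norm_cbinom_atTop {b : ℂ} (hb : b.re < -1) :
    Tendsto (fun N => ‖cbinom b N‖) atTop atTop :=
  tendsto_atTop_mono (one_add_mul_sum_le_norm_cbinom hb.le) <| tendsto_atTop_add_const_left _ _ <|
    Real.tendsto_sum_range_one_div_nat_succ_atTop.const_mul_atTop (by linarith)

/-- For `a ∈ ℂ` with `Re a < 0` the binomial series `∑ C(a,n) z^n`
diverges at `z = -1`: the partial sums of `∑ (-1)^n C(a,n)` do not
converge. -/
theorem binomial_series_diverges_at_neg_one (a : ℂ) (ha : a.re < 0) :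
    ¬ ∃ L : ℂ, Tendsto
      (fun N => ∑ n ∈ Finset.range N, (-1 : ℂ) ^ n * cbinom a n) atTop (nhds L) := by
  rintro ⟨L, hL⟩
  have hpartial : Tendsto (fun N => ‖cbinom (a - 1) N‖) atTop (nhds ‖L‖) := by
    simpa [cbinom_eq_choose, Ring.sum_range_succ_neg_one_pow_mul_choose] using
      (hL.comp (tendsto_add_atTop_nat 1)).norm
  exact not_tendsto_atTop_of_tendsto_nhds hpartial <|
    tendsto_norm_cbinom_atTop (by rw [Complex.sub_re, Complex.one_re]; linarith)
end

section
/- Let a ∈ ℂ, b₀ ∈ ℂ with 1+b₀ ≠ 0, and m ≥ 2 a positive integer. Consider f(z) = b₀ + z^m, and let (c_n) be defined by the generalized J.C.P. Miller recursion: c₀ = (1+b₀)^a, c₁ = 0, and c_n = (1/(n(1+b₀))) Σ_{k=1}^{n} (ka - (n-k)) b_k c_{n-k} for n ≥ 2, where b_m = 1 and b_k = 0 for k ∉ {0,m}. Then c_n = 0 unless m divides n, and for n = km with k ≥ 1, c_{km} = (a/k)(1+b₀)^{a-k} C(a-1, k-1). -/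
open Finset

lemma cbinom_zero (a : ℂ) : cbinom a 0 = 1 := by simp [cbinom]

lemma cbinom_succ (a : ℂ) (n : ℕ) :
    cbinom a (n + 1) = cbinom a n * (a - n) / (n + 1) := by
  have hfac : ((n + 1).factorial : ℂ) = ((n : ℂ) + 1) * n.factorial := by
    push_cast [Nat.factorial_succ]; ring
  rw [cbinom, cbinom, prod_range_succ, hfac, div_mul_eq_mul_div, div_div, mul_comm ((n : ℂ) + 1)]

lemma cbinom_succ_eq_div_mul_cbinom_sub_one (a : ℂ) (k : ℕ) :
    cbinom a (k + 1) = a / (k + 1) * cbinom (a - 1) k := by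
  have hfac : ((k + 1).factorial : ℂ) = ((k : ℂ) + 1) * k.factorial := by
    push_cast [Nat.factorial_succ]; ring
  have hprod : ∏ i ∈ range k, (a - ((i + 1 : ℕ) : ℂ)) = ∏ i ∈ range k, (a - 1 - (i : ℂ)) :=
    prod_congr rfl fun i _ => by push_cast; ring
  rw [cbinom, cbinom, prod_range_succ', hprod, hfac]
  simp only [Nat.cast_zero, sub_zero]
  field_simp

lemma eq_cbinom_mul_cpow_of_succ {x a : ℂ} (hx : x ≠ 0) (u : ℕ → ℂ) (h0 : u 0 = x ^ a)
    (hsucc : ∀ k : ℕ, u (k + 1) = (a - k) / ((k + 1) * x) * u k) (k : ℕ) :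
    u k = cbinom a k * x ^ (a - k) := by
  induction k with
  | zero => simp [h0, cbinom_zero]
  | succ k ih =>
    have hpow : x ^ (a - ((k + 1 : ℕ) : ℂ)) = x ^ (a - k) / x := by
      rw [show a - ((k + 1 : ℕ) : ℂ) = a - k - 1 by push_cast; ring,
        Complex.cpow_sub _ _ hx, Complex.cpow_one]
    rw [hsucc, ih, hpow, cbinom_succ]
    field_simp

lemma sum_Icc_mul_eq_of_single (g b : ℕ → ℂ) {m : ℕ} (hm : 1 ≤ m) (hbm : b m = 1)
    (hb : ∀ k, 1 ≤ k → k ≠ m → b k = 0) (n : ℕ) :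
    ∑ k ∈ Icc 1 n, g k * b k = if m ≤ n then g m else 0 := by
  split_ifs with hmn
  · rw [sum_eq_single_of_mem m (mem_Icc.2 ⟨hm, hmn⟩), hbm, mul_one]
    intro k hk hkm
    rw [hb k (mem_Icc.1 hk).1 hkm, mul_zero]
  · refine sum_eq_zero fun k hk => ?_
    rw [hb k (mem_Icc.1 hk).1 (by rintro rfl; exact hmn (mem_Icc.1 hk).2), mul_zero]

section MillerRecursion

variable {a b0 : ℂ} {m : ℕ} {b c : ℕ → ℂ}

lemma miller_rec_of_monomial (hm : 1 ≤ m)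
    (hb : ∀ k : ℕ, b k = if k = 0 then b0 else if k = m then 1 else 0)
    (hrec : ∀ n : ℕ, 2 ≤ n →
      c n = (1 / ((n : ℂ) * (1 + b0))) *
        ∑ k ∈ Finset.Icc 1 n, ((k : ℂ) * a - ((n - k : ℕ) : ℂ)) * b k * c (n - k))
    {n : ℕ} (hn : 2 ≤ n) :
    c n = if m ≤ n then ((m : ℂ) * a - ((n - m : ℕ) : ℂ)) * c (n - m) / (n * (1 + b0)) else 0 := by
  have hsum := sum_Icc_mul_eq_of_single (fun k => ((k : ℂ) * a - ((n - k : ℕ) : ℂ)) * c (n - k))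
    b hm (by simp [hb, show m ≠ 0 by omega])
    (fun k hk hkm => by simp [hb, hkm, show k ≠ 0 by omega]) n
  rw [hrec n hn, ← sum_congr rfl fun k _ => mul_right_comm _ (c (n - k)) (b k), hsum]
  split_ifs <;> ring

lemma miller_coeff_eq_zero_of_not_dvd (hm : 1 ≤ m)
    (hb : ∀ k : ℕ, b k = if k = 0 then b0 else if k = m then 1 else 0) (hc1 : c 1 = 0)
    (hrec : ∀ n : ℕ, 2 ≤ n →
      c n = (1 / ((n : ℂ) * (1 + b0))) *
        ∑ k ∈ Finset.Icc 1 n, ((k : ℂ) * a - ((n - k : ℕ) : ℂ)) * b k * c (n - k))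
    (n : ℕ) (hn : 1 ≤ n) (hmn : ¬ m ∣ n) : c n = 0 := by
  induction n using Nat.strong_induction_on with
  | _ n ih =>
  obtain rfl | hn2 : n = 1 ∨ 2 ≤ n := by omega
  · exact hc1
  rw [miller_rec_of_monomial hm hb hrec hn2]
  split_ifs with hle
  · have hne : n ≠ m := by rintro rfl; exact hmn dvd_rfl
    have hdvd : ¬ m ∣ n - m := fun h => hmn (by simpa [Nat.sub_add_cancel hle] using h.add dvd_rfl)
    rw [ih (n - m) (by omega) (by omega) hdvd]
    simp
  · rfl

lemma miller_coeff_mul_succ (hm : 2 ≤ m)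
    (hb : ∀ k : ℕ, b k = if k = 0 then b0 else if k = m then 1 else 0)
    (hrec : ∀ n : ℕ, 2 ≤ n →
      c n = (1 / ((n : ℂ) * (1 + b0))) *
        ∑ k ∈ Finset.Icc 1 n, ((k : ℂ) * a - ((n - k : ℕ) : ℂ)) * b k * c (n - k))
    (k : ℕ) : c ((k + 1) * m) = (a - k) / ((k + 1) * (1 + b0)) * c (k * m) := by
  have hle : m ≤ (k + 1) * m := Nat.le_mul_of_pos_left m k.succ_pos
  rw [miller_rec_of_monomial (by omega) hb hrec (by omega), if_pos hle,
    show (k + 1) * m - m = k * m by rw [Nat.succ_mul, Nat.add_sub_cancel]]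
  have hm0 : (m : ℂ) ≠ 0 := by exact_mod_cast (by omega : m ≠ 0)
  push_cast
  field_simp

end MillerRecursion

/-- **Coefficients of `B_a ∘ (b₀ + z^m)`.**  Let `a ∈ ℂ`, `b₀ ∈ ℂ` with
`1 + b₀ ≠ 0`, and `m ≥ 2`.  Consider `f(z) = b₀ + z^m`, i.e. the
coefficients `b_k` with `b₀` in degree `0`, `b_m = 1` and `b_k = 0`
otherwise.  Let `(c_n)` be given by the generalized J.C.P. Miller
recursion: `c₀ = (1+b₀)^a`, `c₁ = 0`, and for `n ≥ 2`
`c_n = (1/(n(1+b₀))) ∑_{k=1}^n (k a - (n-k)) b_k c_{n-k}`.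
Then `c_n = 0` unless `m ∣ n`, and `c_{km} = (a/k)(1+b₀)^{a-k} C(a-1,k-1)`
for every `k ≥ 1`. -/
theorem coefficients_of_binomial_comp_monomial (a b0 : ℂ) (hb0 : 1 + b0 ≠ 0)
    (m : ℕ) (hm : 2 ≤ m) (b c : ℕ → ℂ)
    (hb : ∀ k : ℕ, b k = if k = 0 then b0 else if k = m then 1 else 0)
    (hc0 : c 0 = (1 + b0) ^ a) (hc1 : c 1 = 0)
    (hrec : ∀ n : ℕ, 2 ≤ n →
      c n = (1 / ((n : ℂ) * (1 + b0))) *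
        ∑ k ∈ Finset.Icc 1 n, ((k : ℂ) * a - ((n - k : ℕ) : ℂ)) * b k * c (n - k)) :
    (∀ n : ℕ, 1 ≤ n → ¬ m ∣ n → c n = 0) ∧
      ∀ k : ℕ, 1 ≤ k →
        c (k * m) = (a / (k : ℂ)) * (1 + b0) ^ (a - (k : ℂ)) * cbinom (a - 1) (k - 1) := by
  refine ⟨miller_coeff_eq_zero_of_not_dvd (by omega) hb hc1 hrec, fun k hk => ?_⟩
  have hbinom := eq_cbinom_mul_cpow_of_succ hb0 (fun k => c (k * m)) (by simpa using hc0)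
    (miller_coeff_mul_succ hm hb hrec) k
  obtain ⟨j, rfl⟩ : ∃ j, k = j + 1 := ⟨k - 1, by omega⟩
  rw [hbinom, cbinom_succ_eq_div_mul_cbinom_sub_one, Nat.add_sub_cancel]
  push_cast
  ring
end
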